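/- For any positive integer j and any graph G, the upper j-annihilation number a_j(G) is at most the weak upper j-annihilation number a_j′(G) = max{k | Σ_{i=1}^k d_i − k(j−1)/2 ≤ m(G)}. -/

import Mathlib

open Finset

namespace DSI

variable {V : Type*} (G : SimpleGraph V) [Fintype V] [DecidableEq V] [DecidableRel G.Adj]

/-- The degree sequence of `G`, sorted in non-decreasing order. -/
def dseq : List ℕ := (Finset.univ.val.map (fun v => G.degree v)).sort (· ≤ ·)

/-- The sum of the `k` smallest degrees, `Σ_{i=1}^k d_i`. -/
def sumSmallest (k : ℕ) : ℕ := ((dseq G).take k).sum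

/-- The sum of the `k` largest degrees, `Σ_{i=1}^k d_{n-i+1}`. -/
def sumLargest (k : ℕ) : ℕ := ((dseq G).reverse.take k).sum

/-- The number of edges `m(G)`. -/
def esize : ℕ := G.edgeFinset.card

/-- `m[S]`: the number of edges of the subgraph induced by `S`. -/
def mOn (S : Finset V) : ℕ := (S.sym2.filter (fun e => e ∈ G.edgeSet)).card

/-- A set `I` is `j`-independent if every vertex of `I` has fewer than `j` neighbours in `I`,
i.e. the induced subgraph has maximum degree `< j`. -/
def JIndep (j : ℕ) (I : Finset V) : Prop := ∀ v ∈ I, (I.filter (G.Adj v)).card < j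

/-- The `j`-independence number `α_j(G)`. -/
noncomputable def alphaJ (j : ℕ) : ℕ := sSup {k | ∃ I : Finset V, JIndep G j I ∧ I.card = k}

/-- The family `F` of maximum `j`-independent sets. -/
noncomputable def maxJIndep (j : ℕ) : Set (Finset V) :=
  {S | JIndep G j S ∧ S.card = alphaJ G j}

/-- `max_{S ∈ F} (m[V−S] − m[S])`. -/
noncomputable def fU (j : ℕ) : ℤ :=
  sSup ((fun S : Finset V => (mOn G Sᶜ : ℤ) - (mOn G S : ℤ)) '' maxJIndep G j)

/-- `min_{S ∈ F} (m[V−S] − m[S])`. -/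
noncomputable def fL (j : ℕ) : ℤ :=
  sInf ((fun S : Finset V => (mOn G Sᶜ : ℤ) - (mOn G S : ℤ)) '' maxJIndep G j)

/-- The upper `j`-annihilation number `a_j(G)`. -/
noncomputable def aJ (j : ℕ) : ℕ :=
  sSup {k | k ≤ Fintype.card V ∧ (sumSmallest G k : ℤ) + fU G j ≤ (esize G : ℤ)}

/-- The lower `j`-annihilation number `c_j(G)`. -/
noncomputable def cJ (j : ℕ) : ℕ :=
  sInf {k | k ≤ Fintype.card V ∧ (esize G : ℤ) ≤ (sumLargest G k : ℤ) + fL G j}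

/-- The annihilation number `a(G)`. -/
noncomputable def annihilation : ℕ :=
  sSup {k | k ≤ Fintype.card V ∧ sumSmallest G k ≤ esize G}

/-- An independent set. -/
def IndepSet (I : Finset V) : Prop := ∀ v ∈ I, ∀ w ∈ I, ¬ G.Adj v w

/-- The independence number `α(G)`. -/
noncomputable def alpha : ℕ := sSup {k | ∃ I : Finset V, IndepSet G I ∧ I.card = k}

end DSI
/-- The weak upper `j`-annihilation number
`a_j′(G) = max { k | Σ_{i=1}^k d_i - k(j-1)/2 ≤ m(G) }`. -/
noncomputable def DSI.aJweak {V : Type*} (G : SimpleGraph V) [Fintype V]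
    [DecidableEq V] [DecidableRel G.Adj] (j : ℕ) : ℕ :=
  sSup {k | k ≤ Fintype.card V ∧
    (DSI.sumSmallest G k : ℚ) - (k : ℚ) * ((j : ℚ) - 1) / 2 ≤ (DSI.esize G : ℚ)}

/-!
Every maximum `j`-independent set `S` satisfies `m(G) + m[S] = Σ_{v ∈ S} d(v) + m[V−S]` and
`Σ_{v ∈ S} d(v) ≥ Σ_{i ≤ α_j} d_i`, so `k = α_j` is admissible in the definition of `a_j`, whence
`α_j ≤ a_j`. Since `G[S]` has maximum degree `< j`, `m[S] ≤ α_j (j−1)/2`, hence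
`max_{S ∈ F} (m[V−S] − m[S]) ≥ −α_j (j−1)/2 ≥ −a_j (j−1)/2`, and `k = a_j` is admissible in the
definition of `a_j′`.
-/

theorem List.sum_take_card_le_sum {α : Type*} [AddCommMonoid α] [PartialOrder α]
    [IsOrderedAddMonoid α] {l : List α} (hl : l.Pairwise (· ≤ ·)) {t : Multiset α}
    (ht : t ≤ l) : (l.take (Multiset.card t)).sum ≤ t.sum := by
  induction l generalizing t with
  | nil => simp [Multiset.le_zero.1 ht]
  | cons a l ih =>
    obtain ⟨ha, hl⟩ := List.pairwise_cons.1 hl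
    by_cases hat : a ∈ t
    · obtain ⟨t, rfl⟩ := Multiset.exists_cons_of_mem hat
      rw [← Multiset.cons_coe, Multiset.cons_le_cons_iff] at ht
      simpa using add_le_add_right (ih hl ht) a
    · rw [← Multiset.cons_coe, Multiset.le_cons_of_notMem hat] at ht
      rcases Multiset.empty_or_exists_mem t with rfl | ⟨b, hb⟩
      · simp
      obtain ⟨t, rfl⟩ := Multiset.exists_cons_of_mem hb
      simpa using add_le_add (ha b (by simpa using Multiset.subset_of_le ht hb))
        (ih hl ((Multiset.le_cons_self t b).trans ht))

namespace DSI

variable {V : Type*} (G : SimpleGraph V) [Fintype V] [DecidableRel G.Adj]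

lemma sumSmallest_card_le_sum_degree (S : Finset V) :
    sumSmallest G #S ≤ ∑ v ∈ S, G.degree v := by
  have hS : S.val.map (G.degree ·) ≤ (dseq G : Multiset ℕ) := by
    rw [dseq, Multiset.sort_eq]
    exact Multiset.map_le_map (val_le_iff.2 (subset_univ S))
  simpa [sumSmallest, dseq] using List.sum_take_card_le_sum (Multiset.pairwise_sort _ _) hS

lemma maxJIndep_nonempty (j : ℕ) : (maxJIndep G j).Nonempty := by
  have hne : {k | ∃ I : Finset V, JIndep G j I ∧ #I = k}.Nonempty :=
    ⟨0, ∅, by simp [JIndep]⟩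
  have hbdd : BddAbove {k | ∃ I : Finset V, JIndep G j I ∧ #I = k} :=
    ⟨Fintype.card V, by rintro _ ⟨I, -, rfl⟩; exact card_le_univ I⟩
  obtain ⟨I, hI, hcard⟩ := Nat.sSup_mem hne hbdd
  exact ⟨I, hI, hcard⟩

variable [DecidableEq V]

lemma mOn_eq_card_filter_edgeFinset (S : Finset V) :
    mOn G S = #{e ∈ G.edgeFinset | ∀ a ∈ e, a ∈ S} := by
  unfold mOn
  congr 1
  ext e
  simp [mem_sym2_iff, and_comm]

lemma card_filter_mem_add_ite_subset_compl {e : Sym2 V} (he : ¬e.IsDiag) (S : Finset V) :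
    #{v ∈ S | v ∈ e} + (if ∀ a ∈ e, a ∈ Sᶜ then 1 else 0)
      = 1 + (if ∀ a ∈ e, a ∈ S then 1 else 0) := by
  induction e with
  | h a b =>
    have hab : a ≠ b := he
    have : {v ∈ S | v ∈ s(a, b)}
        = {v ∈ ({a} : Finset V) | v ∈ S} ∪ {v ∈ ({b} : Finset V) | v ∈ S} := by
      ext; simp [or_and_right, and_comm]
    rw [this, card_union_of_disjoint (disjoint_filter_filter (by simpa using hab))]
    by_cases ha : a ∈ S <;> by_cases hb : b ∈ S <;> simp [ha, hb, filter_singleton]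

lemma esize_add_mOn (S : Finset V) :
    esize G + mOn G S = ∑ v ∈ S, G.degree v + mOn G Sᶜ := by
  have hdeg : ∑ v ∈ S, G.degree v = ∑ e ∈ G.edgeFinset, #{v ∈ S | v ∈ e} := by
    simp_rw [← SimpleGraph.card_incidenceFinset_eq_degree,
      SimpleGraph.incidenceFinset_eq_filter, card_filter]
    exact sum_comm
  rw [hdeg, mOn_eq_card_filter_edgeFinset, mOn_eq_card_filter_edgeFinset, card_filter,
    card_filter, esize, card_eq_sum_ones, ← sum_add_distrib, ← sum_add_distrib]
  refine sum_congr rfl fun e he => ?_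
  exact (card_filter_mem_add_ite_subset_compl (G.not_isDiag_of_mem_edgeSet
    (SimpleGraph.mem_edgeFinset.1 he)) S).symm

lemma mOn_eq_card_edgeFinset_induce (S : Finset V) :
    mOn G S = #(G.induce (S : Set V)).edgeFinset := by
  rw [← SimpleGraph.card_filter_edgeFinset_toFinset_subset, mOn_eq_card_filter_edgeFinset]
  simp [subset_iff]

lemma two_mul_mOn (S : Finset V) : 2 * mOn G S = ∑ v ∈ S, #{w ∈ S | G.Adj v w} := by
  rw [mOn_eq_card_edgeFinset_induce, ← SimpleGraph.sum_degrees_eq_twice_card_edges,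
    ← sum_coe_sort S]
  refine Fintype.sum_congr _ _ fun v => ?_
  have := congrArg card (SimpleGraph.map_neighborFinset_induce (G := G) (s := (S : Set V)) v)
  rw [card_map, SimpleGraph.card_neighborFinset_eq_degree] at this
  convert this using 2
  ext w
  simp [and_comm]

lemma JIndep.two_mul_mOn_le {j : ℕ} {S : Finset V} (hS : JIndep G j S) :
    2 * mOn G S ≤ #S * (j - 1) := by
  rw [two_mul_mOn, ← smul_eq_mul, ← sum_const]
  exact sum_le_sum fun v hv => Nat.le_sub_one_of_lt (hS v hv)

lemma le_fU {j : ℕ} {S : Finset V} (hS : S ∈ maxJIndep G j) :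
    (mOn G Sᶜ : ℤ) - mOn G S ≤ fU G j :=
  le_csSup ((Set.toFinite _).image _).bddAbove (Set.mem_image_of_mem _ hS)

lemma neg_le_two_mul_fU (j : ℕ) : -((alphaJ G j * (j - 1) : ℕ) : ℤ) ≤ 2 * fU G j := by
  obtain ⟨S, hS⟩ := maxJIndep_nonempty G j
  have hmOn := hS.1.two_mul_mOn_le
  rw [hS.2] at hmOn
  have := le_fU G hS
  omega

lemma fU_le_esize_sub_sumSmallest (j : ℕ) :
    fU G j ≤ esize G - sumSmallest G (alphaJ G j) := by
  refine csSup_le ((maxJIndep_nonempty G j).image _) ?_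
  rintro _ ⟨S, hS, rfl⟩
  have hsplit := esize_add_mOn G S
  have hdeg := sumSmallest_card_le_sum_degree G S
  rw [hS.2] at hdeg
  dsimp only
  omega

def aJAdmissible (j : ℕ) : Set ℕ :=
  {k | k ≤ Fintype.card V ∧ (sumSmallest G k : ℤ) + fU G j ≤ (esize G : ℤ)}

lemma bddAbove_aJAdmissible (j : ℕ) : BddAbove (aJAdmissible G j) :=
  ⟨Fintype.card V, fun _ hk => hk.1⟩

lemma alphaJ_mem_aJAdmissible (j : ℕ) : alphaJ G j ∈ aJAdmissible G j := by
  obtain ⟨S, hS⟩ := maxJIndep_nonempty G j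
  refine ⟨hS.2 ▸ card_le_univ S, ?_⟩
  linarith [fU_le_esize_sub_sumSmallest G j]

lemma alphaJ_le_aJ (j : ℕ) : alphaJ G j ≤ aJ G j :=
  le_csSup (bddAbove_aJAdmissible G j) (alphaJ_mem_aJAdmissible G j)

lemma aJ_mem_aJAdmissible (j : ℕ) : aJ G j ∈ aJAdmissible G j :=
  Nat.sSup_mem ⟨_, alphaJ_mem_aJAdmissible G j⟩ (bddAbove_aJAdmissible G j)

end DSI

theorem aJ_le_aJweak {V : Type*} (G : SimpleGraph V) [Fintype V]
    [DecidableEq V] [DecidableRel G.Adj] (j : ℕ) (hj : 1 ≤ j) :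
    DSI.aJ G j ≤ DSI.aJweak G j := by
  obtain ⟨hcard, hsum⟩ := DSI.aJ_mem_aJAdmissible G j
  have hα : (DSI.alphaJ G j : ℚ) ≤ DSI.aJ G j := by exact_mod_cast DSI.alphaJ_le_aJ G j
  have hfU : -((DSI.alphaJ G j : ℚ) * (j - 1)) ≤ 2 * DSI.fU G j := by
    have h := DSI.neg_le_two_mul_fU G j
    rw [Nat.cast_mul, Nat.cast_sub hj] at h
    exact_mod_cast h
  have hsum' : (DSI.sumSmallest G (DSI.aJ G j) : ℚ) + DSI.fU G j ≤ DSI.esize G := by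
    exact_mod_cast hsum
  have hj' : (0 : ℚ) ≤ j - 1 := sub_nonneg.2 (by exact_mod_cast hj)
  refine le_csSup ⟨Fintype.card V, fun _ hk => hk.1⟩ ⟨hcard, ?_⟩
  linarith [mul_le_mul_of_nonneg_right hα hj']
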